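/- arXiv:1401.1443 — 4 statements merged into one kernel-verified Lean document; each statement's English description precedes it below -/
import Mathlib

section
/- For all p, q ∈ (0,1) with p ≠ q, all r in the open interval Λ_{p,q} = (max{0, p+q−1}, min{p,q}), and any self-similar coupling γ_r, the first moment integral satisfies ∫_{ℝ×ℝ} |x − y| dγ_r(x,y) = ((t₂−t₁)/(1−c)) · (c(p−q)² + (1−c)(p+q−2r)) / ((1−c) + c(p+q−2r)). -/
/-!
Write `D = ∫ (x - y) dγ` and `I = ∫ |x - y| dγ`. Integrating `x - y` against the
self-similarity equation, each piece `S_{i,j}` contributes `c D + (tᵢ - tⱼ)`, so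
`(1 - c) D = (q - p)(t₂ - t₁)`. For `|x - y|` the diagonal pieces contribute `c I`, while on the
off-diagonal pieces `|c (x - y)| ≤ c ≤ t₂ - t₁` fixes the sign of `c (x - y) ± (t₂ - t₁)`, so they
contribute `(t₂ - t₁) ∓ c D`. This gives a second linear equation, solved for `I`.
-/

open MeasureTheory

theorem integral_finsetSum_smul_map {ι X Y E : Type*} [MeasurableSpace X] [MeasurableSpace Y]
    [NormedAddCommGroup E] [NormedSpace ℝ E] {μ : Measure X} (s : Finset ι) {w : ι → ℝ}
    (hw : ∀ i ∈ s, 0 ≤ w i) {T : ι → X → Y} (hT : ∀ i ∈ s, AEMeasurable (T i) μ) {f : Y → E}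
    (hf : ∀ i ∈ s, AEStronglyMeasurable f (μ.map (T i)))
    (hfT : ∀ i ∈ s, Integrable (fun x => f (T i x)) μ) :
    ∫ y, f y ∂(∑ i ∈ s, ENNReal.ofReal (w i) • μ.map (T i))
      = ∑ i ∈ s, w i • ∫ x, f (T i x) ∂μ := by
  rw [integral_finsetSum_measure fun i hi =>
    ((integrable_map_measure (hf i hi) (hT i hi)).2 (hfT i hi)).smul_measure ENNReal.ofReal_ne_top]
  refine Finset.sum_congr rfl fun i hi => ?_
  rw [integral_smul_measure, ENNReal.toReal_ofReal (hw i hi), integral_map (hT i hi) (hf i hi)]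

theorem integral_const_mul_add_const {X : Type*} [MeasurableSpace X] {μ : Measure X}
    [IsProbabilityMeasure μ] {g : X → ℝ} (hg : Integrable g μ) (a b : ℝ) :
    ∫ x, (a * g x + b) ∂μ = a * ∫ x, g x ∂μ + b := by
  rw [integral_add (hg.const_mul a) (integrable_const b), integral_const_mul, integral_const,
    probReal_univ, one_smul]

theorem integrable_fst_sub_snd_of_ae_abs_le {γ : Measure (ℝ × ℝ)} [IsFiniteMeasure γ] {C : ℝ}
    (h : ∀ᵐ z ∂γ, |z.1 - z.2| ≤ C) : Integrable (fun z : ℝ × ℝ => z.1 - z.2) γ :=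
  .of_bound (by fun_prop) C h

/-- The map `S_{i,j}` for translations `a = tᵢ`, `b = tⱼ`. -/
def couplingMap (c a b : ℝ) (z : ℝ × ℝ) : ℝ × ℝ := (c * z.1 + a, c * z.2 + b)

theorem measurable_couplingMap (c a b : ℝ) : Measurable (couplingMap c a b) := by
  unfold couplingMap
  fun_prop

theorem couplingMap_fst_sub_snd (c a b : ℝ) (z : ℝ × ℝ) :
    (couplingMap c a b z).1 - (couplingMap c a b z).2 = c * (z.1 - z.2) + (a - b) := by
  simp only [couplingMap]
  ring

/-- Only the self-similarity equation: being a probability measure on `[0,1]²` is assumed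
separately. -/
def IsSelfSimilarCoupling (c t₁ t₂ p q r : ℝ) (γ : Measure (ℝ × ℝ)) : Prop :=
  γ = ENNReal.ofReal r • γ.map (couplingMap c t₁ t₁)
    + ENNReal.ofReal (p - r) • γ.map (couplingMap c t₁ t₂)
    + ENNReal.ofReal (q - r) • γ.map (couplingMap c t₂ t₁)
    + ENNReal.ofReal (1 - p - q + r) • γ.map (couplingMap c t₂ t₂)

namespace IsSelfSimilarCoupling

variable {c t₁ t₂ p q r : ℝ} {γ : Measure (ℝ × ℝ)}

theorem integral_eq (h : IsSelfSimilarCoupling c t₁ t₂ p q r γ)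
    (hr : r ∈ Set.Icc (max 0 (p + q - 1)) (min p q)) {f : ℝ × ℝ → ℝ} (hf : Measurable f)
    (hfT : ∀ a b, Integrable (fun z => f (couplingMap c a b z)) γ) :
    ∫ z, f z ∂γ = r * ∫ z, f (couplingMap c t₁ t₁ z) ∂γ
      + (p - r) * ∫ z, f (couplingMap c t₁ t₂ z) ∂γ
      + (q - r) * ∫ z, f (couplingMap c t₂ t₁ z) ∂γ
      + (1 - p - q + r) * ∫ z, f (couplingMap c t₂ t₂ z) ∂γ := by
  obtain ⟨hr₀, hr₁⟩ := hr
  simp only [max_le_iff, le_min_iff] at hr₀ hr₁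
  let w : Fin 4 → ℝ := ![r, p - r, q - r, 1 - p - q + r]
  let T : Fin 4 → ℝ × ℝ → ℝ × ℝ :=
    ![couplingMap c t₁ t₁, couplingMap c t₁ t₂, couplingMap c t₂ t₁, couplingMap c t₂ t₂]
  have hsum : γ = ∑ i, ENNReal.ofReal (w i) • γ.map (T i) := by
    rw [Fin.sum_univ_four]
    exact h
  have hT : ∀ i, Measurable (T i) := by
    intro i
    fin_cases i <;> exact measurable_couplingMap _ _ _
  conv_lhs => rw [hsum]
  rw [integral_finsetSum_smul_map _ (fun i _ => ?_) (fun i _ => (hT i).aemeasurable)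
    (fun i _ => hf.aestronglyMeasurable) (fun i _ => ?_), Fin.sum_univ_four]
  · rfl
  · fin_cases i <;> simp only [w] <;> norm_num <;> linarith
  · fin_cases i <;> exact hfT _ _

theorem integrable_couplingMap_fst_sub_snd [IsFiniteMeasure γ]
    (hint : Integrable (fun z : ℝ × ℝ => z.1 - z.2) γ) (a b : ℝ) :
    Integrable (fun z => (couplingMap c a b z).1 - (couplingMap c a b z).2) γ := by
  simp_rw [couplingMap_fst_sub_snd]
  exact (hint.const_mul c).add (integrable_const _)

theorem one_sub_mul_integral_fst_sub_snd [IsProbabilityMeasure γ]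
    (h : IsSelfSimilarCoupling c t₁ t₂ p q r γ) (hr : r ∈ Set.Icc (max 0 (p + q - 1)) (min p q))
    (hint : Integrable (fun z : ℝ × ℝ => z.1 - z.2) γ) :
    (1 - c) * ∫ z, (z.1 - z.2) ∂γ = (q - p) * (t₂ - t₁) := by
  have hmap (a b : ℝ) : ∫ z, ((couplingMap c a b z).1 - (couplingMap c a b z).2) ∂γ
      = c * ∫ z, (z.1 - z.2) ∂γ + (a - b) := by
    simp_rw [couplingMap_fst_sub_snd]
    exact integral_const_mul_add_const hint c (a - b)
  have hself := h.integral_eq hr (f := fun z => z.1 - z.2) (by fun_prop)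
    (integrable_couplingMap_fst_sub_snd hint)
  rw [hmap, hmap, hmap, hmap] at hself
  linear_combination hself

theorem mul_integral_abs_fst_sub_snd [IsProbabilityMeasure γ]
    (h : IsSelfSimilarCoupling c t₁ t₂ p q r γ) (hr : r ∈ Set.Icc (max 0 (p + q - 1)) (min p q))
    (hc : 0 ≤ c) (ht : c ≤ t₂ - t₁) (hbound : ∀ᵐ z ∂γ, |z.1 - z.2| ≤ 1) :
    (1 - c + c * (p + q - 2 * r)) * ∫ z, |z.1 - z.2| ∂γ
      = (p + q - 2 * r) * (t₂ - t₁) + c * (q - p) * ∫ z, (z.1 - z.2) ∂γ := by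
  have hint := integrable_fst_sub_snd_of_ae_abs_le hbound
  have hdiag (a : ℝ) : ∫ z, |(couplingMap c a a z).1 - (couplingMap c a a z).2| ∂γ
      = c * ∫ z, |z.1 - z.2| ∂γ := by
    simp_rw [couplingMap_fst_sub_snd, sub_self, add_zero, abs_mul, abs_of_nonneg hc]
    exact integral_const_mul c _
  have hsmall : ∀ᵐ z ∂γ, |c * (z.1 - z.2)| ≤ t₂ - t₁ := by
    filter_upwards [hbound] with z hz
    rw [abs_mul, abs_of_nonneg hc]
    nlinarith
  have h₁₂ : ∫ z, |(couplingMap c t₁ t₂ z).1 - (couplingMap c t₁ t₂ z).2| ∂γ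
      = -c * ∫ z, (z.1 - z.2) ∂γ + (t₂ - t₁) := by
    rw [← integral_const_mul_add_const hint]
    refine integral_congr_ae ?_
    filter_upwards [hsmall] with z hz
    rw [couplingMap_fst_sub_snd, abs_of_nonpos (by linarith [le_abs_self (c * (z.1 - z.2))])]
    ring
  have h₂₁ : ∫ z, |(couplingMap c t₂ t₁ z).1 - (couplingMap c t₂ t₁ z).2| ∂γ
      = c * ∫ z, (z.1 - z.2) ∂γ + (t₂ - t₁) := by
    rw [← integral_const_mul_add_const hint]
    refine integral_congr_ae ?_
    filter_upwards [hsmall] with z hz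
    rw [couplingMap_fst_sub_snd, abs_of_nonneg (by linarith [neg_abs_le (c * (z.1 - z.2))])]
  have hself := h.integral_eq hr (f := fun z => |z.1 - z.2|) (by fun_prop)
    fun a b => (integrable_couplingMap_fst_sub_snd hint a b).abs
  rw [hdiag, hdiag, h₁₂, h₂₁] at hself
  linear_combination hself

end IsSelfSimilarCoupling

theorem first_moment_self_similar_coupling_general
    (c t₁ t₂ : ℝ) (hc : c ∈ Set.Ioc (0:ℝ) (1/2))
    (ht₂ : t₂ ∈ Set.Icc (t₁ + c) (1 - c))
    (p q : ℝ)
    (r : ℝ) (hr : r ∈ Set.Ioo (max 0 (p + q - 1)) (min p q))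
    (γ : Measure (ℝ × ℝ)) (hγ : IsProbabilityMeasure γ)
    (hsupp : γ ((Set.Icc (0:ℝ) 1 ×ˢ Set.Icc (0:ℝ) 1)ᶜ) = 0)
    (hss : γ =
        ENNReal.ofReal r • γ.map (fun z : ℝ × ℝ => (c * z.1 + t₁, c * z.2 + t₁))
      + ENNReal.ofReal (p - r) • γ.map (fun z : ℝ × ℝ => (c * z.1 + t₁, c * z.2 + t₂))
      + ENNReal.ofReal (q - r) • γ.map (fun z : ℝ × ℝ => (c * z.1 + t₂, c * z.2 + t₁))
      + ENNReal.ofReal (1 - p - q + r) • γ.map (fun z : ℝ × ℝ => (c * z.1 + t₂, c * z.2 + t₂))) :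
    ∫ z : ℝ × ℝ, |z.1 - z.2| ∂γ
      = (t₂ - t₁) / (1 - c) *
          ((c * (p - q)^2 + (1 - c) * (p + q - 2*r)) / ((1 - c) + c * (p + q - 2*r))) := by
  obtain ⟨hc₀, hc₁⟩ := hc
  have hcoupling : IsSelfSimilarCoupling c t₁ t₂ p q r γ := hss
  have hbound : ∀ᵐ z ∂γ, |z.1 - z.2| ≤ 1 := by
    filter_upwards [mem_ae_iff.mpr hsupp] with z ⟨⟨hx₀, hx₁⟩, hy₀, hy₁⟩
    exact abs_sub_le_iff.2 ⟨by linarith, by linarith⟩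
  have hsigned := hcoupling.one_sub_mul_integral_fst_sub_snd (Set.Ioo_subset_Icc_self hr)
    (integrable_fst_sub_snd_of_ae_abs_le hbound)
  have habs := hcoupling.mul_integral_abs_fst_sub_snd (Set.Ioo_subset_Icc_self hr) hc₀.le
    (by linarith [ht₂.1]) hbound
  have hpos : 0 < 1 - c + c * (p + q - 2 * r) := by
    obtain ⟨hrp, hrq⟩ := lt_min_iff.1 hr.2
    nlinarith
  rw [div_mul_div_comm, eq_div_iff (mul_pos (by linarith) hpos).ne']
  linear_combination (1 - c) * habs + c * (q - p) * hsigned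

/-- Theorem 2.1: first moment of a self-similar coupling. -/
theorem first_moment_self_similar_coupling
    (c t₁ t₂ : ℝ) (hc : c ∈ Set.Ioc (0:ℝ) (1/2))
    (ht₁ : t₁ ∈ Set.Icc (0:ℝ) (1 - 2*c)) (ht₂ : t₂ ∈ Set.Icc (t₁ + c) (1 - c))
    (p q : ℝ) (hp : p ∈ Set.Ioo (0:ℝ) 1) (hq : q ∈ Set.Ioo (0:ℝ) 1) (hpq : p ≠ q)
    (r : ℝ) (hr : r ∈ Set.Ioo (max 0 (p + q - 1)) (min p q))
    (γ : Measure (ℝ × ℝ)) (hγ : IsProbabilityMeasure γ)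
    (hsupp : γ ((Set.Icc (0:ℝ) 1 ×ˢ Set.Icc (0:ℝ) 1)ᶜ) = 0)
    (hss : γ =
        ENNReal.ofReal r • γ.map (fun z : ℝ × ℝ => (c * z.1 + t₁, c * z.2 + t₁))
      + ENNReal.ofReal (p - r) • γ.map (fun z : ℝ × ℝ => (c * z.1 + t₁, c * z.2 + t₂))
      + ENNReal.ofReal (q - r) • γ.map (fun z : ℝ × ℝ => (c * z.1 + t₂, c * z.2 + t₁))
      + ENNReal.ofReal (1 - p - q + r) • γ.map (fun z : ℝ × ℝ => (c * z.1 + t₂, c * z.2 + t₂))) :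
    ∫ z : ℝ × ℝ, |z.1 - z.2| ∂γ
      = (t₂ - t₁) / (1 - c) *
          ((c * (p - q)^2 + (1 - c) * (p + q - 2*r)) / ((1 - c) + c * (p + q - 2*r))) :=
  first_moment_self_similar_coupling_general c t₁ t₂ hc ht₂ p q r hr γ hγ hsupp hss
end

section
/- For all p, q ∈ (0,1) with p ≠ q, all r in the open interval Λ_{p,q} = (max{0, p+q−1}, min{p,q}), and any self-similar coupling γ_r, the second moment integral satisfies ∫_{ℝ×ℝ} |x − y|² dγ_r(x,y) = ((t₂−t₁)/(1−c))² · (2c(p−q)² + (1−c)(p+q−2r)) / (1+c). -/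
/-!
The difference map `(x, y) ↦ x - y` intertwines `S_{i,j}` with `x ↦ c x + (tᵢ - tⱼ)`, so the
pushforward of `γ` under it is a self-similar measure on `ℝ` with weights `r, p - r, q - r,
1 - p - q + r` and translations `0, t₁ - t₂, t₂ - t₁, 0`. Integrating `x` and `x ^ 2` against
its self-similarity equation gives linear equations for its first two moments, with
coefficients `1 - c` and `1 - c ^ 2`.
-/

open MeasureTheory

section AffineSelfSimilar

variable {ι : Type*} [Fintype ι] {ν : Measure ℝ} {c : ℝ} {w s : ι → ℝ}

theorem integral_eq_sum_integral_comp_affine (hw : ∀ i, 0 ≤ w i)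
    (hν : ν = ∑ i, ENNReal.ofReal (w i) • ν.map (fun x => c * x + s i))
    {f : ℝ → ℝ} (hf : Continuous f) (hfi : ∀ i, Integrable (fun x => f (c * x + s i)) ν) :
    ∫ x, f x ∂ν = ∑ i, w i * ∫ x, f (c * x + s i) ∂ν := by
  have hT : ∀ i, AEMeasurable (fun x : ℝ => c * x + s i) ν := fun i => by fun_prop
  conv_lhs => rw [hν]
  rw [integral_finsetSum_measure fun i _ => ((integrable_map_measure
    hf.aestronglyMeasurable (hT i)).2 (hfi i)).smul_measure ENNReal.ofReal_ne_top]
  refine Finset.sum_congr rfl fun i _ => ?_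
  rw [integral_smul_measure, integral_map (hT i) hf.aestronglyMeasurable,
    ENNReal.toReal_ofReal (hw i), smul_eq_mul]

variable [IsProbabilityMeasure ν]

theorem sum_eq_one_of_eq_sum_map_affine (hw : ∀ i, 0 ≤ w i)
    (hν : ν = ∑ i, ENNReal.ofReal (w i) • ν.map (fun x => c * x + s i)) :
    ∑ i, w i = 1 := by
  simpa using (integral_eq_sum_integral_comp_affine hw hν continuous_const
    fun _ => integrable_const (1 : ℝ)).symm

theorem integral_mul_add (h : Integrable (fun x => x) ν) (a b : ℝ) :
    ∫ x, (a * x + b) ∂ν = a * ∫ x, x ∂ν + b := by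
  rw [integral_add (h.const_mul a) (integrable_const b), integral_const_mul]
  simp

theorem integral_mul_add_sq (h : MemLp id 2 ν) (a b : ℝ) :
    ∫ x, (a * x + b) ^ 2 ∂ν = a ^ 2 * ∫ x, x ^ 2 ∂ν + 2 * a * b * ∫ x, x ∂ν + b ^ 2 := by
  have h1 : Integrable (fun x => x) ν := h.integrable one_le_two
  have h2 : Integrable (fun x => x ^ 2) ν := h.integrable_sq
  calc ∫ x, (a * x + b) ^ 2 ∂ν = ∫ x, (a ^ 2 * x ^ 2 + 2 * a * b * x + b ^ 2) ∂ν := by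
        congr 1 with x; ring
    _ = _ := by
      rw [integral_add (f := fun x => a ^ 2 * x ^ 2 + 2 * a * b * x)
        ((h2.const_mul _).add (h1.const_mul _)) (integrable_const _),
        integral_add (h2.const_mul _) (h1.const_mul _), integral_const_mul, integral_const_mul]
      simp

theorem one_sub_mul_integral_self_eq (hw : ∀ i, 0 ≤ w i)
    (hν : ν = ∑ i, ENNReal.ofReal (w i) • ν.map (fun x => c * x + s i))
    (h : Integrable (fun x => x) ν) :
    (1 - c) * ∫ x, x ∂ν = ∑ i, w i * s i := by
  have hmean := integral_eq_sum_integral_comp_affine hw hν continuous_id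
    fun i => (h.const_mul c).add (integrable_const (s i))
  simp only [id, integral_mul_add h, mul_add, Finset.sum_add_distrib, ← Finset.sum_mul,
    sum_eq_one_of_eq_sum_map_affine hw hν] at hmean
  linear_combination hmean

theorem one_sub_sq_mul_integral_sq_eq (hw : ∀ i, 0 ≤ w i)
    (hν : ν = ∑ i, ENNReal.ofReal (w i) • ν.map (fun x => c * x + s i)) (h : MemLp id 2 ν) :
    (1 - c ^ 2) * ∫ x, x ^ 2 ∂ν
      = 2 * c * (∑ i, w i * s i) * ∫ x, x ∂ν + ∑ i, w i * s i ^ 2 := by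
  have hsq := integral_eq_sum_integral_comp_affine hw hν (continuous_pow 2)
    fun i => (h.const_mul c |>.add (memLp_const (s i))).integrable_sq
  simp only [integral_mul_add_sq h, mul_add, Finset.sum_add_distrib, ← Finset.sum_mul,
    sum_eq_one_of_eq_sum_map_affine hw hν] at hsq
  have hcross : ∑ i, w i * (2 * c * s i * ∫ x, x ∂ν) = 2 * c * (∑ i, w i * s i) * ∫ x, x ∂ν := by
    rw [Finset.mul_sum, Finset.sum_mul]
    exact Finset.sum_congr rfl fun i _ => by ring
  linear_combination hsq + hcross

theorem integral_sq_eq_of_eq_sum_map_affine (hw : ∀ i, 0 ≤ w i)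
    (hν : ν = ∑ i, ENNReal.ofReal (w i) • ν.map (fun x => c * x + s i)) (h : MemLp id 2 ν)
    (hc : 1 - c ≠ 0) (hc' : 1 + c ≠ 0) :
    ∫ x, x ^ 2 ∂ν
      = (2 * c * (∑ i, w i * s i) ^ 2 + (1 - c) * ∑ i, w i * s i ^ 2) / ((1 - c) ^ 2 * (1 + c)) := by
  have h1 := one_sub_mul_integral_self_eq hw hν (h.integrable one_le_two)
  have h2 := one_sub_sq_mul_integral_sq_eq hw hν h
  field_simp
  linear_combination (1 - c) * h2 + 2 * c * (∑ i, w i * s i) * h1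

end AffineSelfSimilar

theorem map_fst_sub_snd_map_prodMap_affine (γ : Measure (ℝ × ℝ)) (c a b : ℝ) :
    (γ.map fun z => (c * z.1 + a, c * z.2 + b)).map (fun z => z.1 - z.2)
      = (γ.map fun z => z.1 - z.2).map (fun x => c * x + (a - b)) := by
  rw [Measure.map_map (by fun_prop) (by fun_prop), Measure.map_map (by fun_prop) (by fun_prop)]
  congr 1 with z
  simp only [Function.comp_apply]
  ring

theorem map_fst_sub_snd_eq_sum_map_affine {γ : Measure (ℝ × ℝ)} {c t₁ t₂ p q r : ℝ}
    (hss : γ =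
        ENNReal.ofReal r • γ.map (fun z : ℝ × ℝ => (c * z.1 + t₁, c * z.2 + t₁))
      + ENNReal.ofReal (p - r) • γ.map (fun z : ℝ × ℝ => (c * z.1 + t₁, c * z.2 + t₂))
      + ENNReal.ofReal (q - r) • γ.map (fun z : ℝ × ℝ => (c * z.1 + t₂, c * z.2 + t₁))
      + ENNReal.ofReal (1 - p - q + r) • γ.map (fun z : ℝ × ℝ => (c * z.1 + t₂, c * z.2 + t₂))) :
    γ.map (fun z => z.1 - z.2) = ∑ i, ENNReal.ofReal (![r, p - r, q - r, 1 - p - q + r] i) •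
      (γ.map fun z => z.1 - z.2).map (fun x => c * x + ![0, t₁ - t₂, t₂ - t₁, 0] i) := by
  have hmap := congrArg (Measure.map fun z : ℝ × ℝ => z.1 - z.2) hss
  simp only [Measure.map_add _ _ (by fun_prop : Measurable fun z : ℝ × ℝ => z.1 - z.2),
    Measure.map_smul, map_fst_sub_snd_map_prodMap_affine, sub_self] at hmap
  simpa [Fin.sum_univ_four] using hmap

theorem memLp_fst_sub_snd_of_unit_square {γ : Measure (ℝ × ℝ)} [IsFiniteMeasure γ]
    (hsupp : γ ((Set.Icc (0:ℝ) 1 ×ˢ Set.Icc (0:ℝ) 1)ᶜ) = 0) (p : ENNReal) :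
    MemLp (fun z : ℝ × ℝ => z.1 - z.2) p γ := by
  refine MemLp.of_bound (by fun_prop) 1 ?_
  filter_upwards [ae_iff.2 hsupp] with z ⟨⟨hx0, hx1⟩, ⟨hy0, hy1⟩⟩
  rw [Real.norm_eq_abs, abs_le]
  constructor <;> linarith

theorem second_moment_self_similar_coupling_general
    (c t₁ t₂ : ℝ) (hc : c ∈ Set.Ioc (0:ℝ) (1/2))
    (p q : ℝ)
    (r : ℝ) (hr : r ∈ Set.Ioo (max 0 (p + q - 1)) (min p q))
    (γ : Measure (ℝ × ℝ)) (hγ : IsProbabilityMeasure γ)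
    (hsupp : γ ((Set.Icc (0:ℝ) 1 ×ˢ Set.Icc (0:ℝ) 1)ᶜ) = 0)
    (hss : γ =
        ENNReal.ofReal r • γ.map (fun z : ℝ × ℝ => (c * z.1 + t₁, c * z.2 + t₁))
      + ENNReal.ofReal (p - r) • γ.map (fun z : ℝ × ℝ => (c * z.1 + t₁, c * z.2 + t₂))
      + ENNReal.ofReal (q - r) • γ.map (fun z : ℝ × ℝ => (c * z.1 + t₂, c * z.2 + t₁))
      + ENNReal.ofReal (1 - p - q + r) • γ.map (fun z : ℝ × ℝ => (c * z.1 + t₂, c * z.2 + t₂))) :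
    ∫ z : ℝ × ℝ, |z.1 - z.2|^2 ∂γ
      = ((t₂ - t₁) / (1 - c))^2 *
          ((2 * c * (p - q)^2 + (1 - c) * (p + q - 2*r)) / (1 + c)) := by
  have hD : Measurable fun z : ℝ × ℝ => z.1 - z.2 := by fun_prop
  have : IsProbabilityMeasure (γ.map fun z => z.1 - z.2) :=
    Measure.isProbabilityMeasure_map hD.aemeasurable
  have hν2 : MemLp id 2 (γ.map fun z => z.1 - z.2) :=
    (memLp_map_measure_iff aestronglyMeasurable_id hD.aemeasurable).2
      (memLp_fst_sub_snd_of_unit_square hsupp 2)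
  obtain ⟨hr_gt, hr_lt⟩ := hr
  rw [max_lt_iff] at hr_gt
  rw [lt_min_iff] at hr_lt
  have hw : ∀ i, 0 ≤ ![r, p - r, q - r, 1 - p - q + r] i := by
    intro i; fin_cases i <;> simp <;> linarith
  have hc1 : 1 - c ≠ 0 := by linarith [hc.2]
  have hc1' : 1 + c ≠ 0 := by linarith [hc.1]
  calc ∫ z : ℝ × ℝ, |z.1 - z.2| ^ 2 ∂γ = ∫ x, x ^ 2 ∂(γ.map fun z => z.1 - z.2) := by
        simp only [sq_abs]
        exact (integral_map hD.aemeasurable (continuous_pow 2).aestronglyMeasurable).symm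
    _ = _ := by
      rw [integral_sq_eq_of_eq_sum_map_affine hw (map_fst_sub_snd_eq_sum_map_affine hss) hν2
        hc1 hc1']
      simp only [Fin.sum_univ_four, Matrix.cons_val]
      field_simp
      ring

/-- Theorem 2.3: second moment of a self-similar coupling. -/
theorem second_moment_self_similar_coupling
    (c t₁ t₂ : ℝ) (hc : c ∈ Set.Ioc (0:ℝ) (1/2))
    (ht₁ : t₁ ∈ Set.Icc (0:ℝ) (1 - 2*c)) (ht₂ : t₂ ∈ Set.Icc (t₁ + c) (1 - c))
    (p q : ℝ) (hp : p ∈ Set.Ioo (0:ℝ) 1) (hq : q ∈ Set.Ioo (0:ℝ) 1) (hpq : p ≠ q)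
    (r : ℝ) (hr : r ∈ Set.Ioo (max 0 (p + q - 1)) (min p q))
    (γ : Measure (ℝ × ℝ)) (hγ : IsProbabilityMeasure γ)
    (hsupp : γ ((Set.Icc (0:ℝ) 1 ×ˢ Set.Icc (0:ℝ) 1)ᶜ) = 0)
    (hss : γ =
        ENNReal.ofReal r • γ.map (fun z : ℝ × ℝ => (c * z.1 + t₁, c * z.2 + t₁))
      + ENNReal.ofReal (p - r) • γ.map (fun z : ℝ × ℝ => (c * z.1 + t₁, c * z.2 + t₂))
      + ENNReal.ofReal (q - r) • γ.map (fun z : ℝ × ℝ => (c * z.1 + t₂, c * z.2 + t₁))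
      + ENNReal.ofReal (1 - p - q + r) • γ.map (fun z : ℝ × ℝ => (c * z.1 + t₂, c * z.2 + t₂))) :
    ∫ z : ℝ × ℝ, |z.1 - z.2|^2 ∂γ
      = ((t₂ - t₁) / (1 - c))^2 *
          ((2 * c * (p - q)^2 + (1 - c) * (p + q - 2*r)) / (1 + c)) :=
  second_moment_self_similar_coupling_general c t₁ t₂ hc p q r hr γ hγ hsupp hss
end

section
/- For all p, q ∈ (0,1) with p ≠ q, all r in the open interval Λ_{p,q} = (max{0, p+q−1}, min{p,q}), and any self-similar coupling γ_r, the signed first moment satisfies ∫_{ℝ×ℝ} (x − y) dγ_r(x,y) = 4(t₂−t₁)(q−r)(p−r) / ((p−q)(1−c+c(p+q−2r))) − ((p+q−2r)/(p−q)) · ∫_{ℝ×ℝ} |x − y| dγ_r(x,y). -/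
/-!
Integrate `x - y` and `|x - y|` against the self-similarity relation. Each `S_{i,j}` maps
`x - y` to `c (x - y) + t_i - t_j`, so the first moment `I` satisfies `(1 - c) I = (t₂ - t₁)(q - p)`.
Since `t₂ - t₁ ≥ c`, on the images of `[0,1]²` under `S_{1,2}` and `S_{2,1}` the sign of `x - y`
is constant, so `|x - y|` is affine there as well, and the absolute moment `J` satisfies
`(1 - c + c (p + q - 2r)) J = (t₂ - t₁)(p + q - 2r) + c (q - p) I`.
Adding `p - q` times the first equation to `p + q - 2r` times the second and using
`(p + q - 2r)² - (p - q)² = 4 (p - r)(q - r)` gives the formula.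
-/

open MeasureTheory Set

theorem integral_eq_sum_integral_comp_of_eq_sum_smul_map {α ι E : Type*} [MeasurableSpace α]
    [NormedAddCommGroup E] [NormedSpace ℝ E] {μ : Measure α} (s : Finset ι) {w : ι → ℝ}
    (hw : ∀ i ∈ s, 0 ≤ w i) {T : ι → α → α} (hT : ∀ i ∈ s, AEMeasurable (T i) μ)
    (hμ : μ = ∑ i ∈ s, ENNReal.ofReal (w i) • μ.map (T i)) {f : α → E}
    (hf : StronglyMeasurable f) (hfT : ∀ i ∈ s, Integrable (fun x => f (T i x)) μ) :
    ∫ x, f x ∂μ = ∑ i ∈ s, w i • ∫ x, f (T i x) ∂μ := by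
  conv_lhs => rw [hμ]
  rw [integral_finsetSum_measure fun i hi =>
    ((integrable_map_measure hf.aestronglyMeasurable (hT i hi)).2 (hfT i hi)).smul_measure
      ENNReal.ofReal_ne_top]
  refine Finset.sum_congr rfl fun i hi => ?_
  rw [integral_smul_measure, integral_map (hT i hi) hf.aestronglyMeasurable,
    ENNReal.toReal_ofReal (hw i hi)]

theorem Continuous.integrable_of_ae_mem_compact {X E : Type*} [TopologicalSpace X]
    [MeasurableSpace X] [OpensMeasurableSpace X] [T2Space X] [NormedAddCommGroup E]
    {μ : Measure X} [IsFiniteMeasureOnCompacts μ] {f : X → E} (hf : Continuous f) {K : Set X}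
    (hK : IsCompact K) (hμK : ∀ᵐ x ∂μ, x ∈ K) : Integrable f μ := by
  rw [← Measure.restrict_eq_self_of_ae_mem hμK]
  exact hf.continuousOn.integrableOn_compact hK

theorem integral_const_add_mul {α : Type*} [MeasurableSpace α] {μ : Measure α}
    [IsProbabilityMeasure μ] {g : α → ℝ} (hg : Integrable g μ) (k c : ℝ) :
    ∫ x, (k + c * g x) ∂μ = k + c * ∫ x, g x ∂μ := by
  rw [integral_add (integrable_const k) (hg.const_mul c), integral_const, probReal_univ,
    one_smul, integral_const_mul]

theorem integral_eq_of_selfSimilarCoupling {γ : Measure (ℝ × ℝ)} [IsFiniteMeasure γ]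
    {c t₁ t₂ p q r : ℝ} (hr₀ : 0 ≤ r) (hrp : r ≤ p) (hrq : r ≤ q) (hrpq : p + q - 1 ≤ r)
    {K : Set (ℝ × ℝ)} (hK : IsCompact K) (hγK : ∀ᵐ z ∂γ, z ∈ K)
    (hss : γ =
        ENNReal.ofReal r • γ.map (fun z : ℝ × ℝ => (c * z.1 + t₁, c * z.2 + t₁))
      + ENNReal.ofReal (p - r) • γ.map (fun z : ℝ × ℝ => (c * z.1 + t₁, c * z.2 + t₂))
      + ENNReal.ofReal (q - r) • γ.map (fun z : ℝ × ℝ => (c * z.1 + t₂, c * z.2 + t₁))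
      + ENNReal.ofReal (1 - p - q + r) • γ.map (fun z : ℝ × ℝ => (c * z.1 + t₂, c * z.2 + t₂)))
    {f : ℝ × ℝ → ℝ} (hf : Continuous f) :
    ∫ z, f z ∂γ =
        r * ∫ z, f (c * z.1 + t₁, c * z.2 + t₁) ∂γ
      + (p - r) * ∫ z, f (c * z.1 + t₁, c * z.2 + t₂) ∂γ
      + (q - r) * ∫ z, f (c * z.1 + t₂, c * z.2 + t₁) ∂γ
      + (1 - p - q + r) * ∫ z, f (c * z.1 + t₂, c * z.2 + t₂) ∂γ := by
  have h := integral_eq_sum_integral_comp_of_eq_sum_smul_map Finset.univ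
    (w := ![r, p - r, q - r, 1 - p - q + r])
    (T := fun i z => (c * z.1 + ![t₁, t₁, t₂, t₂] i, c * z.2 + ![t₁, t₂, t₁, t₂] i))
    (fun i _ => by fin_cases i <;> simp <;> linarith) (fun i _ => by fun_prop)
    (by rw [Fin.sum_univ_four]; exact hss) hf.stronglyMeasurable
    (fun i _ => (by fun_prop : Continuous _).integrable_of_ae_mem_compact hK hγK)
  simpa only [Fin.sum_univ_four, smul_eq_mul, Matrix.cons_val] using h

section AffineMoments

variable {γ : Measure (ℝ × ℝ)} {c : ℝ}

theorem integrable_fst_sub_snd_of_ae_mem_unitSquare [IsFiniteMeasure γ]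
    (hγ : ∀ᵐ z ∂γ, z ∈ Icc (0 : ℝ) 1 ×ˢ Icc (0 : ℝ) 1) :
    Integrable (fun z : ℝ × ℝ => z.1 - z.2) γ :=
  (by fun_prop : Continuous fun z : ℝ × ℝ => z.1 - z.2).integrable_of_ae_mem_compact
    (isCompact_Icc.prod isCompact_Icc) hγ

theorem integral_affine_sub [IsProbabilityMeasure γ]
    (h : Integrable (fun z : ℝ × ℝ => z.1 - z.2) γ) (c a b : ℝ) :
    ∫ z : ℝ × ℝ, (c * z.1 + a - (c * z.2 + b)) ∂γ
      = c * ∫ z : ℝ × ℝ, (z.1 - z.2) ∂γ + (a - b) := by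
  rw [add_comm, ← integral_const_add_mul h]
  congr 1 with z
  ring

theorem integral_abs_affine_sub_same (hc : 0 ≤ c) (a : ℝ) :
    ∫ z : ℝ × ℝ, |c * z.1 + a - (c * z.2 + a)| ∂γ = c * ∫ z : ℝ × ℝ, |z.1 - z.2| ∂γ := by
  simp_rw [add_sub_add_right_eq_sub, ← mul_sub, abs_mul, abs_of_nonneg hc, integral_const_mul]

theorem abs_affine_sub_of_add_le {a b x y : ℝ} (hc : 0 ≤ c) (hab : a + c ≤ b) (hx : x ≤ 1)
    (hy : 0 ≤ y) : |c * x + a - (c * y + b)| = b - a - c * (x - y) := by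
  rw [abs_of_nonpos (by nlinarith)]
  ring

theorem integral_abs_affine_sub_of_add_le [IsProbabilityMeasure γ]
    (hγ : ∀ᵐ z ∂γ, z ∈ Icc (0 : ℝ) 1 ×ˢ Icc (0 : ℝ) 1) {a b : ℝ} (hc : 0 ≤ c) (hab : a + c ≤ b) :
    ∫ z : ℝ × ℝ, |c * z.1 + a - (c * z.2 + b)| ∂γ
      = b - a - c * ∫ z : ℝ × ℝ, (z.1 - z.2) ∂γ := by
  rw [sub_eq_add_neg _ (c * _), neg_mul_eq_neg_mul,
    ← integral_const_add_mul (integrable_fst_sub_snd_of_ae_mem_unitSquare hγ)]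
  refine integral_congr_ae ?_
  filter_upwards [hγ] with z ⟨⟨_, hx⟩, ⟨hy, _⟩⟩
  rw [abs_affine_sub_of_add_le hc hab hx hy]
  ring

theorem integral_abs_affine_sub_of_le_add [IsProbabilityMeasure γ]
    (hγ : ∀ᵐ z ∂γ, z ∈ Icc (0 : ℝ) 1 ×ˢ Icc (0 : ℝ) 1) {a b : ℝ} (hc : 0 ≤ c) (hab : a + c ≤ b) :
    ∫ z : ℝ × ℝ, |c * z.1 + b - (c * z.2 + a)| ∂γ
      = b - a + c * ∫ z : ℝ × ℝ, (z.1 - z.2) ∂γ := by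
  rw [← integral_const_add_mul (integrable_fst_sub_snd_of_ae_mem_unitSquare hγ)]
  refine integral_congr_ae ?_
  filter_upwards [hγ] with z ⟨⟨hx, _⟩, ⟨_, hy⟩⟩
  rw [abs_sub_comm, abs_affine_sub_of_add_le hc hab hy hx]
  ring

end AffineMoments

theorem eq_of_moment_equations {c d p q r I J : ℝ} (hpq : p ≠ q)
    (hD : 1 - c + c * (p + q - 2 * r) ≠ 0) (hI : (1 - c) * I = d * (q - p))
    (hJ : (1 - c + c * (p + q - 2 * r)) * J = d * (p + q - 2 * r) + c * (q - p) * I) :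
    I = 4 * d * (q - r) * (p - r) / ((p - q) * (1 - c + c * (p + q - 2 * r)))
      - ((p + q - 2 * r) / (p - q)) * J := by
  have hpq' : p - q ≠ 0 := sub_ne_zero.2 hpq
  set D := 1 - c + c * (p + q - 2 * r) with hD_def
  field_simp
  linear_combination (p - q) * hI + (p + q - 2 * r) * hJ + (p - q) * I * hD_def

theorem signed_first_moment_self_similar_coupling_general
    (c t₁ t₂ : ℝ) (hc : c ∈ Set.Ioc (0:ℝ) (1/2))
    (ht₂ : t₂ ∈ Set.Icc (t₁ + c) (1 - c))
    (p q : ℝ) (hpq : p ≠ q)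
    (r : ℝ) (hr : r ∈ Set.Ioo (max 0 (p + q - 1)) (min p q))
    (γ : Measure (ℝ × ℝ)) (hγ : IsProbabilityMeasure γ)
    (hsupp : γ ((Set.Icc (0:ℝ) 1 ×ˢ Set.Icc (0:ℝ) 1)ᶜ) = 0)
    (hss : γ =
        ENNReal.ofReal r • γ.map (fun z : ℝ × ℝ => (c * z.1 + t₁, c * z.2 + t₁))
      + ENNReal.ofReal (p - r) • γ.map (fun z : ℝ × ℝ => (c * z.1 + t₁, c * z.2 + t₂))
      + ENNReal.ofReal (q - r) • γ.map (fun z : ℝ × ℝ => (c * z.1 + t₂, c * z.2 + t₁))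
      + ENNReal.ofReal (1 - p - q + r) • γ.map (fun z : ℝ × ℝ => (c * z.1 + t₂, c * z.2 + t₂))) :
    ∫ z : ℝ × ℝ, (z.1 - z.2) ∂γ
      = 4 * (t₂ - t₁) * (q - r) * (p - r) / ((p - q) * (1 - c + c * (p + q - 2*r)))
        - ((p + q - 2*r) / (p - q)) * ∫ z : ℝ × ℝ, |z.1 - z.2| ∂γ := by
  obtain ⟨hc₀, hc₁⟩ := hc
  obtain ⟨hr₀, hrpq⟩ := max_lt_iff.1 hr.1
  obtain ⟨hrp, hrq⟩ := lt_min_iff.1 hr.2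
  have hsq : ∀ᵐ z ∂γ, z ∈ Icc (0 : ℝ) 1 ×ˢ Icc (0 : ℝ) 1 := mem_ae_iff.2 hsupp
  have hdecomp {f : ℝ × ℝ → ℝ} (hf : Continuous f) := integral_eq_of_selfSimilarCoupling
    hr₀.le hrp.le hrq.le hrpq.le (isCompact_Icc.prod isCompact_Icc) hsq hss hf
  have hI := hdecomp (f := fun z => z.1 - z.2) (by fun_prop)
  have hJ := hdecomp (f := fun z => |z.1 - z.2|) (by fun_prop)
  simp only [integral_affine_sub (integrable_fst_sub_snd_of_ae_mem_unitSquare hsq)] at hI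
  rw [integral_abs_affine_sub_same hc₀.le, integral_abs_affine_sub_same hc₀.le,
    integral_abs_affine_sub_of_add_le hsq hc₀.le ht₂.1,
    integral_abs_affine_sub_of_le_add hsq hc₀.le ht₂.1] at hJ
  have hD : 0 < 1 - c + c * (p + q - 2 * r) :=
    add_pos_of_pos_of_nonneg (by linarith) (mul_nonneg hc₀.le (by linarith))
  exact eq_of_moment_equations hpq hD.ne' (by linear_combination hI) (by linear_combination hJ)

/-- Lemma 3.1: the signed first moment of a self-similar coupling. -/
theorem signed_first_moment_self_similar_coupling
    (c t₁ t₂ : ℝ) (hc : c ∈ Set.Ioc (0:ℝ) (1/2))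
    (ht₁ : t₁ ∈ Set.Icc (0:ℝ) (1 - 2*c)) (ht₂ : t₂ ∈ Set.Icc (t₁ + c) (1 - c))
    (p q : ℝ) (hp : p ∈ Set.Ioo (0:ℝ) 1) (hq : q ∈ Set.Ioo (0:ℝ) 1) (hpq : p ≠ q)
    (r : ℝ) (hr : r ∈ Set.Ioo (max 0 (p + q - 1)) (min p q))
    (γ : Measure (ℝ × ℝ)) (hγ : IsProbabilityMeasure γ)
    (hsupp : γ ((Set.Icc (0:ℝ) 1 ×ˢ Set.Icc (0:ℝ) 1)ᶜ) = 0)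
    (hss : γ =
        ENNReal.ofReal r • γ.map (fun z : ℝ × ℝ => (c * z.1 + t₁, c * z.2 + t₁))
      + ENNReal.ofReal (p - r) • γ.map (fun z : ℝ × ℝ => (c * z.1 + t₁, c * z.2 + t₂))
      + ENNReal.ofReal (q - r) • γ.map (fun z : ℝ × ℝ => (c * z.1 + t₂, c * z.2 + t₁))
      + ENNReal.ofReal (1 - p - q + r) • γ.map (fun z : ℝ × ℝ => (c * z.1 + t₂, c * z.2 + t₂))) :
    ∫ z : ℝ × ℝ, (z.1 - z.2) ∂γ
      = 4 * (t₂ - t₁) * (q - r) * (p - r) / ((p - q) * (1 - c + c * (p + q - 2*r)))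
        - ((p + q - 2*r) / (p - q)) * ∫ z : ℝ × ℝ, |z.1 - z.2| ∂γ :=
  signed_first_moment_self_similar_coupling_general c t₁ t₂ hc ht₂ p q hpq r hr γ hγ hsupp hss
end

section
/- For all p, q ∈ (0,1) with p ≠ q and all self-similar measures μ_p and μ_q, the first Wasserstein distance satisfies W₁(μ_p, μ_q) = ((t₂−t₁)/(1−c)) · |p−q|. -/
/-!
The mean is a lower bound: `|∫ x dμ - ∫ y dν| ≤ ∫ |x - y| dγ` for every coupling `γ`, and
integrating the self-similarity equation gives `(1 - c) m_w = t₂ - w (t₂ - t₁)` for the mean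
`m_w` of `μ_w`, so `|m_p - m_q| = (t₂ - t₁) / (1 - c) |p - q|`.

For the upper bound let `q ≤ p`. Gluing a coupling `γ` of `μ_p` and `μ_q` through the maps
`S₁ × S₁`, `S₁ × S₂`, `S₂ × S₂` with weights `q`, `p - q`, `1 - p` gives again a coupling. The first
two pieces scale the cost by `c`, and since `S₁ [0, 1]` lies to the left of `S₂ [0, 1]` the cost of
the cross piece is linear, so it only involves the means. Hence the cost minus `m_q - m_p` is
multiplied by `c (1 - (p - q)) < 1` at each step, and iterating from `μ_p ⊗ μ_q` produces couplings
whose cost tends to `m_q - m_p`.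
-/

open MeasureTheory

/-- The first Wasserstein distance: the infimum over couplings of μ and ν of the
first moment ∫ |x − y| dγ. -/
noncomputable def wasserstein1 (μ ν : Measure ℝ) : ℝ :=
  sInf { a : ℝ | ∃ γ : Measure (ℝ × ℝ), IsProbabilityMeasure γ ∧
    γ.map Prod.fst = μ ∧ γ.map Prod.snd = ν ∧ a = ∫ z : ℝ × ℝ, |z.1 - z.2| ∂γ }

lemma integrable_fst_of_map_fst {μ : Measure ℝ} {γ : Measure (ℝ × ℝ)}
    (h₁ : γ.map Prod.fst = μ) (hμ : Integrable (fun x : ℝ => x) μ) :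
    Integrable (fun z : ℝ × ℝ => z.1) γ := by
  rw [← h₁] at hμ
  exact (integrable_map_measure aestronglyMeasurable_id measurable_fst.aemeasurable).1 hμ

lemma integrable_snd_of_map_snd {ν : Measure ℝ} {γ : Measure (ℝ × ℝ)}
    (h₂ : γ.map Prod.snd = ν) (hν : Integrable (fun x : ℝ => x) ν) :
    Integrable (fun z : ℝ × ℝ => z.2) γ := by
  rw [← h₂] at hν
  exact (integrable_map_measure aestronglyMeasurable_id measurable_snd.aemeasurable).1 hν

lemma integral_fst_of_map_fst {μ : Measure ℝ} {γ : Measure (ℝ × ℝ)}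
    (h₁ : γ.map Prod.fst = μ) : ∫ z, z.1 ∂γ = ∫ x, x ∂μ := by
  rw [← h₁, integral_map (f := fun x => x) measurable_fst.aemeasurable aestronglyMeasurable_id]

lemma integral_snd_of_map_snd {ν : Measure ℝ} {γ : Measure (ℝ × ℝ)}
    (h₂ : γ.map Prod.snd = ν) : ∫ z, z.2 ∂γ = ∫ x, x ∂ν := by
  rw [← h₂, integral_map (f := fun x => x) measurable_snd.aemeasurable aestronglyMeasurable_id]

lemma isProbabilityMeasure_of_map_fst {μ : Measure ℝ} [IsProbabilityMeasure μ]
    {γ : Measure (ℝ × ℝ)} (h₁ : γ.map Prod.fst = μ) : IsProbabilityMeasure γ :=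
  (Measure.isProbabilityMeasure_map_iff measurable_fst.aemeasurable).1 (h₁ ▸ ‹_›)

lemma wasserstein1_comm (μ ν : Measure ℝ) : wasserstein1 μ ν = wasserstein1 ν μ := by
  have swap_mem : ∀ (μ ν : Measure ℝ) (a : ℝ),
      (∃ γ : Measure (ℝ × ℝ), IsProbabilityMeasure γ ∧ γ.map Prod.fst = μ ∧
        γ.map Prod.snd = ν ∧ a = ∫ z : ℝ × ℝ, |z.1 - z.2| ∂γ) →
      ∃ γ : Measure (ℝ × ℝ), IsProbabilityMeasure γ ∧ γ.map Prod.fst = ν ∧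
        γ.map Prod.snd = μ ∧ a = ∫ z : ℝ × ℝ, |z.1 - z.2| ∂γ := by
    rintro μ ν _ ⟨γ, hγ, h₁, h₂, rfl⟩
    refine ⟨γ.map Prod.swap, Measure.isProbabilityMeasure_map measurable_swap.aemeasurable,
      ?_, ?_, ?_⟩
    · rwa [Measure.map_map measurable_fst measurable_swap]
    · rwa [Measure.map_map measurable_snd measurable_swap]
    · rw [integral_map measurable_swap.aemeasurable (by fun_prop)]
      simp_rw [Prod.fst_swap, Prod.snd_swap, abs_sub_comm]
  unfold wasserstein1
  congr 1
  exact Set.ext fun a => ⟨swap_mem μ ν a, swap_mem ν μ a⟩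

lemma wasserstein1_le_integral {μ ν : Measure ℝ} {γ : Measure (ℝ × ℝ)} [IsProbabilityMeasure γ]
    (h₁ : γ.map Prod.fst = μ) (h₂ : γ.map Prod.snd = ν) :
    wasserstein1 μ ν ≤ ∫ z, |z.1 - z.2| ∂γ := by
  refine csInf_le ⟨0, ?_⟩ ⟨γ, ‹_›, h₁, h₂, rfl⟩
  rintro _ ⟨γ, -, -, -, rfl⟩
  exact integral_nonneg fun _ => abs_nonneg _

lemma abs_integral_sub_le_integral_abs_sub {μ ν : Measure ℝ} {γ : Measure (ℝ × ℝ)}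
    (h₁ : γ.map Prod.fst = μ) (h₂ : γ.map Prod.snd = ν) (hμ : Integrable (fun x : ℝ => x) μ)
    (hν : Integrable (fun x : ℝ => x) ν) :
    |∫ x, x ∂μ - ∫ x, x ∂ν| ≤ ∫ z, |z.1 - z.2| ∂γ := by
  rw [← integral_fst_of_map_fst h₁, ← integral_snd_of_map_snd h₂,
    ← integral_sub (integrable_fst_of_map_fst h₁ hμ) (integrable_snd_of_map_snd h₂ hν)]
  exact abs_integral_le_integral_abs

lemma abs_integral_sub_le_wasserstein1 {μ ν : Measure ℝ} [IsProbabilityMeasure μ]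
    [IsProbabilityMeasure ν] (hμ : Integrable (fun x : ℝ => x) μ)
    (hν : Integrable (fun x : ℝ => x) ν) :
    |∫ x, x ∂μ - ∫ x, x ∂ν| ≤ wasserstein1 μ ν := by
  refine le_csInf ⟨_, μ.prod ν, inferInstance, by simp, by simp, rfl⟩ ?_
  rintro _ ⟨γ, -, h₁, h₂, rfl⟩
  exact abs_integral_sub_le_integral_abs_sub h₁ h₂ hμ hν

lemma wasserstein1_le_of_contracting {μ ν : Measure ℝ} [IsProbabilityMeasure μ]
    (T : Measure (ℝ × ℝ) → Measure (ℝ × ℝ)) {a δ : ℝ} (ha₀ : 0 ≤ a) (ha₁ : a < 1)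
    {γ₀ : Measure (ℝ × ℝ)} (h₀₁ : γ₀.map Prod.fst = μ) (h₀₂ : γ₀.map Prod.snd = ν)
    (hT : ∀ γ : Measure (ℝ × ℝ), γ.map Prod.fst = μ → γ.map Prod.snd = ν →
      (T γ).map Prod.fst = μ ∧ (T γ).map Prod.snd = ν ∧
        ∫ z, |z.1 - z.2| ∂(T γ) - δ = a * (∫ z, |z.1 - z.2| ∂γ - δ)) :
    wasserstein1 μ ν ≤ δ := by
  have hiter : ∀ n : ℕ, (T^[n] γ₀).map Prod.fst = μ ∧ (T^[n] γ₀).map Prod.snd = ν ∧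
      ∫ z, |z.1 - z.2| ∂(T^[n] γ₀) = δ + a ^ n * (∫ z, |z.1 - z.2| ∂γ₀ - δ) := by
    intro n
    induction n with
    | zero => exact ⟨h₀₁, h₀₂, by simp⟩
    | succ n ih =>
      obtain ⟨h₁, h₂, hcost⟩ := ih
      obtain ⟨h₁', h₂', hcost'⟩ := hT _ h₁ h₂
      rw [Function.iterate_succ_apply']
      exact ⟨h₁', h₂', by rw [pow_succ]; linear_combination hcost' + a * hcost⟩
  have hlim : Filter.Tendsto (fun n : ℕ => δ + a ^ n * (∫ z, |z.1 - z.2| ∂γ₀ - δ))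
      Filter.atTop (nhds δ) := by
    simpa using ((tendsto_pow_atTop_nhds_zero_of_lt_one ha₀ ha₁).mul_const
      (∫ z, |z.1 - z.2| ∂γ₀ - δ)).const_add δ
  refine ge_of_tendsto' hlim fun n => ?_
  obtain ⟨h₁, h₂, hcost⟩ := hiter n
  have := isProbabilityMeasure_of_map_fst h₁
  exact hcost ▸ wasserstein1_le_integral h₁ h₂

lemma integrable_id_of_measure_compl_Icc_eq_zero {μ : Measure ℝ} [IsFiniteMeasure μ]
    {a b : ℝ} (h : μ (Set.Icc a b)ᶜ = 0) : Integrable (fun x : ℝ => x) μ :=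
  Integrable.of_bound aestronglyMeasurable_id (max |a| |b|) <|
    (show ∀ᵐ x ∂μ, x ∈ Set.Icc a b from mem_ae_iff.2 h).mono fun _ hx =>
      abs_le_max_abs_abs hx.1 hx.2

/-- The self-similarity equation of `μ_w` for `S₁ x = c x + t₁` and `S₂ x = c x + t₂`. -/
def IsSelfSimilar (c t₁ t₂ w : ℝ) (μ : Measure ℝ) : Prop :=
  μ = ENNReal.ofReal w • μ.map (c * · + t₁) + ENNReal.ofReal (1 - w) • μ.map (c * · + t₂)

lemma integrable_id_map_affine {μ : Measure ℝ} [IsFiniteMeasure μ]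
    (hμ : Integrable (fun x : ℝ => x) μ) (c t : ℝ) :
    Integrable (fun x : ℝ => x) (μ.map (c * · + t)) :=
  (integrable_map_measure aestronglyMeasurable_id (by fun_prop)).2
    ((hμ.const_mul c).add (integrable_const t))

lemma integral_id_map_affine {μ : Measure ℝ} [IsProbabilityMeasure μ]
    (hμ : Integrable (fun x : ℝ => x) μ) (c t : ℝ) :
    ∫ x, x ∂(μ.map (c * · + t)) = c * ∫ x, x ∂μ + t := by
  rw [integral_map (f := fun x => x) (by fun_prop) aestronglyMeasurable_id,
    integral_add (hμ.const_mul c) (integrable_const t), integral_const_mul]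
  simp

lemma IsSelfSimilar.integral_id {c t₁ t₂ w : ℝ} {μ : Measure ℝ} [IsProbabilityMeasure μ]
    (h : IsSelfSimilar c t₁ t₂ w μ) (hμ : Integrable (fun x : ℝ => x) μ)
    (hw : w ∈ Set.Icc (0 : ℝ) 1) :
    (1 - c) * ∫ x, x ∂μ = t₂ - w * (t₂ - t₁) := by
  have hmix : ∫ x, x ∂μ = w * (c * ∫ x, x ∂μ + t₁) + (1 - w) * (c * ∫ x, x ∂μ + t₂) := by
    conv_lhs => rw [h]
    rw [integral_add_measure
        ((integrable_id_map_affine hμ c t₁).smul_measure ENNReal.ofReal_ne_top)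
        ((integrable_id_map_affine hμ c t₂).smul_measure ENNReal.ofReal_ne_top),
      integral_smul_measure, integral_smul_measure, integral_id_map_affine hμ,
      integral_id_map_affine hμ, ENNReal.toReal_ofReal hw.1,
      ENNReal.toReal_ofReal (sub_nonneg.2 hw.2), smul_eq_mul, smul_eq_mul]
  linear_combination hmix

section Maps

variable {α β α' β' : Type*} [MeasurableSpace α] [MeasurableSpace β] [MeasurableSpace α']
  [MeasurableSpace β'] {ρ : Measure (α × β)} {f : α → α'} {g : β → β'}

lemma map_fst_map_prodMap (hf : Measurable f) (hg : Measurable g) :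
    (ρ.map (Prod.map f g)).map Prod.fst = (ρ.map Prod.fst).map f := by
  rw [Measure.map_map measurable_fst (hf.prodMap hg), Measure.map_map hf measurable_fst]
  rfl

lemma map_snd_map_prodMap (hf : Measurable f) (hg : Measurable g) :
    (ρ.map (Prod.map f g)).map Prod.snd = (ρ.map Prod.snd).map g := by
  rw [Measure.map_map measurable_snd (hf.prodMap hg), Measure.map_map hg measurable_snd]
  rfl

end Maps

/-- For `q ≤ p` this maps couplings of `μ_p` and `μ_q` to couplings of `μ_p` and `μ_q`: the extra
weight `p - q` that `μ_p` gives to `S₁` is matched with the extra weight of `S₂` in `μ_q`. -/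
noncomputable def selfSimilarCouplingStep (c t₁ t₂ p q : ℝ) (γ : Measure (ℝ × ℝ)) :
    Measure (ℝ × ℝ) :=
  ENNReal.ofReal q • γ.map (Prod.map (c * · + t₁) (c * · + t₁))
    + ENNReal.ofReal (p - q) • γ.map (Prod.map (c * · + t₁) (c * · + t₂))
    + ENNReal.ofReal (1 - p) • γ.map (Prod.map (c * · + t₂) (c * · + t₂))

lemma integral_abs_sub_map_prodMap_affine (γ : Measure (ℝ × ℝ)) (c s t : ℝ) :
    ∫ z, |z.1 - z.2| ∂(γ.map (Prod.map (c * · + s) (c * · + t)))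
      = ∫ z, |c * (z.1 - z.2) + (s - t)| ∂γ := by
  rw [integral_map (by fun_prop) (by fun_prop)]
  congr with z
  simp only [Prod.map]
  ring_nf

lemma integrable_abs_sub_map_prodMap_affine {γ : Measure (ℝ × ℝ)} [IsFiniteMeasure γ]
    (hx : Integrable (fun z : ℝ × ℝ => z.1) γ)
    (hy : Integrable (fun z : ℝ × ℝ => z.2) γ) (c s t : ℝ) :
    Integrable (fun z : ℝ × ℝ => |z.1 - z.2|) (γ.map (Prod.map (c * · + s) (c * · + t))) := by
  rw [integrable_map_measure (by fun_prop) (by fun_prop)]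
  exact (((hx.const_mul c).add (integrable_const s)).sub
    ((hy.const_mul c).add (integrable_const t))).abs

section CouplingStep

variable {c t₁ t₂ p q : ℝ} {μ ν : Measure ℝ} {γ : Measure (ℝ × ℝ)}

lemma map_fst_selfSimilarCouplingStep (hμ : IsSelfSimilar c t₁ t₂ p μ)
    (h₁ : γ.map Prod.fst = μ) (hq : 0 ≤ q) (hqp : q ≤ p) :
    (selfSimilarCouplingStep c t₁ t₂ p q γ).map Prod.fst = μ := by
  have hS : ∀ t, Measurable (c * · + t) := by fun_prop
  rw [selfSimilarCouplingStep, Measure.map_add _ _ measurable_fst,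
    Measure.map_add _ _ measurable_fst, Measure.map_smul, Measure.map_smul, Measure.map_smul,
    map_fst_map_prodMap (hS _) (hS _), map_fst_map_prodMap (hS _) (hS _),
    map_fst_map_prodMap (hS _) (hS _), h₁, ← add_smul,
    ← ENNReal.ofReal_add hq (sub_nonneg.2 hqp), add_sub_cancel]
  exact hμ.symm

lemma map_snd_selfSimilarCouplingStep (hν : IsSelfSimilar c t₁ t₂ q ν)
    (h₂ : γ.map Prod.snd = ν) (hqp : q ≤ p) (hp : p ≤ 1) :
    (selfSimilarCouplingStep c t₁ t₂ p q γ).map Prod.snd = ν := by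
  have hS : ∀ t, Measurable (c * · + t) := by fun_prop
  rw [selfSimilarCouplingStep, Measure.map_add _ _ measurable_snd,
    Measure.map_add _ _ measurable_snd, Measure.map_smul, Measure.map_smul, Measure.map_smul,
    map_snd_map_prodMap (hS _) (hS _), map_snd_map_prodMap (hS _) (hS _),
    map_snd_map_prodMap (hS _) (hS _), h₂, add_assoc, ← add_smul,
    ← ENNReal.ofReal_add (sub_nonneg.2 hqp) (sub_nonneg.2 hp), sub_add_sub_cancel']
  exact hν.symm

/-- The cost of the cross piece `S₁ × S₂`: on `[0, 1]²` we have `S₁ x ≤ S₂ y`. -/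
lemma integral_abs_affine_sub_of_le [IsProbabilityMeasure γ] (h₁ : γ.map Prod.fst = μ)
    (h₂ : γ.map Prod.snd = ν) (hμ : μ (Set.Icc 0 1)ᶜ = 0) (hν : ν (Set.Icc 0 1)ᶜ = 0)
    (hc : 0 ≤ c) (ht : c ≤ t₂ - t₁) :
    ∫ z, |c * (z.1 - z.2) + (t₁ - t₂)| ∂γ = t₂ - t₁ + c * (∫ x, x ∂ν - ∫ x, x ∂μ) := by
  have : IsFiniteMeasure μ := h₁ ▸ inferInstance
  have : IsFiniteMeasure ν := h₂ ▸ inferInstance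
  have hx := integrable_fst_of_map_fst h₁ (integrable_id_of_measure_compl_Icc_eq_zero hμ)
  have hy := integrable_snd_of_map_snd h₂ (integrable_id_of_measure_compl_Icc_eq_zero hν)
  have hx_mem : ∀ᵐ z ∂γ, z.1 ∈ Set.Icc (0 : ℝ) 1 :=
    ae_of_ae_map measurable_fst.aemeasurable (by rw [h₁]; exact mem_ae_iff.2 hμ)
  have hy_mem : ∀ᵐ z ∂γ, z.2 ∈ Set.Icc (0 : ℝ) 1 :=
    ae_of_ae_map measurable_snd.aemeasurable (by rw [h₂]; exact mem_ae_iff.2 hν)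
  have hae : ∀ᵐ z ∂γ, |c * (z.1 - z.2) + (t₁ - t₂)| = c * z.2 - c * z.1 + (t₂ - t₁) := by
    filter_upwards [hx_mem, hy_mem] with z hz₁ hz₂
    rw [abs_of_nonpos (by nlinarith [hz₁.2, hz₂.1])]
    ring
  have hlin : Integrable (fun z : ℝ × ℝ => c * z.2 - c * z.1) γ :=
    (hy.const_mul c).sub (hx.const_mul c)
  rw [integral_congr_ae hae, integral_add hlin (integrable_const _),
    integral_sub (hy.const_mul c) (hx.const_mul c), integral_const_mul, integral_const_mul,
    integral_fst_of_map_fst h₁, integral_snd_of_map_snd h₂, integral_const]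
  simp only [probReal_univ, one_smul]
  ring

lemma integral_abs_sub_selfSimilarCouplingStep [IsProbabilityMeasure γ]
    (h₁ : γ.map Prod.fst = μ) (h₂ : γ.map Prod.snd = ν) (hμ : μ (Set.Icc 0 1)ᶜ = 0)
    (hν : ν (Set.Icc 0 1)ᶜ = 0) (hc : 0 ≤ c) (ht : c ≤ t₂ - t₁) (hq : 0 ≤ q) (hqp : q ≤ p)
    (hp : p ≤ 1) :
    ∫ z, |z.1 - z.2| ∂(selfSimilarCouplingStep c t₁ t₂ p q γ)
      = c * (1 - (p - q)) * ∫ z, |z.1 - z.2| ∂γ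
        + (p - q) * (t₂ - t₁ + c * (∫ x, x ∂ν - ∫ x, x ∂μ)) := by
  have : IsFiniteMeasure μ := h₁ ▸ inferInstance
  have : IsFiniteMeasure ν := h₂ ▸ inferInstance
  have hint := integrable_abs_sub_map_prodMap_affine
    (integrable_fst_of_map_fst h₁ (integrable_id_of_measure_compl_Icc_eq_zero hμ))
    (integrable_snd_of_map_snd h₂ (integrable_id_of_measure_compl_Icc_eq_zero hν)) c
  have hdiag : ∀ t, ∫ z, |c * (z.1 - z.2) + (t - t)| ∂γ = c * ∫ z, |z.1 - z.2| ∂γ := by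
    intro t
    simp_rw [sub_self, add_zero, abs_mul, abs_of_nonneg hc]
    exact integral_const_mul _ _
  rw [selfSimilarCouplingStep,
    integral_add_measure (((hint _ _).smul_measure ENNReal.ofReal_ne_top).add_measure
      ((hint _ _).smul_measure ENNReal.ofReal_ne_top))
      ((hint _ _).smul_measure ENNReal.ofReal_ne_top),
    integral_add_measure ((hint _ _).smul_measure ENNReal.ofReal_ne_top)
      ((hint _ _).smul_measure ENNReal.ofReal_ne_top),
    integral_smul_measure, integral_smul_measure, integral_smul_measure,
    integral_abs_sub_map_prodMap_affine, integral_abs_sub_map_prodMap_affine,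
    integral_abs_sub_map_prodMap_affine, hdiag, hdiag,
    integral_abs_affine_sub_of_le h₁ h₂ hμ hν hc ht, ENNReal.toReal_ofReal hq,
    ENNReal.toReal_ofReal (sub_nonneg.2 hqp), ENNReal.toReal_ofReal (sub_nonneg.2 hp)]
  simp only [smul_eq_mul]
  ring

end CouplingStep

theorem wasserstein1_eq_of_isSelfSimilar_of_le {c t₁ t₂ p q : ℝ} {μp μq : Measure ℝ}
    [IsProbabilityMeasure μp] [IsProbabilityMeasure μq] (hc₀ : 0 ≤ c) (hc₁ : c < 1)
    (ht : c ≤ t₂ - t₁) (hq : 0 ≤ q) (hqp : q ≤ p) (hp : p ≤ 1)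
    (hsuppp : μp (Set.Icc 0 1)ᶜ = 0) (hsuppq : μq (Set.Icc 0 1)ᶜ = 0)
    (hssp : IsSelfSimilar c t₁ t₂ p μp) (hssq : IsSelfSimilar c t₁ t₂ q μq) :
    wasserstein1 μp μq = (t₂ - t₁) / (1 - c) * (p - q) := by
  have hintp := integrable_id_of_measure_compl_Icc_eq_zero hsuppp
  have hintq := integrable_id_of_measure_compl_Icc_eq_zero hsuppq
  set δ := ∫ x, x ∂μq - ∫ x, x ∂μp
  have hδ : (1 - c) * δ = (p - q) * (t₂ - t₁) := by
    linear_combination hssq.integral_id hintq ⟨hq, hqp.trans hp⟩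
      - hssp.integral_id hintp ⟨hq.trans hqp, hp⟩
  have hδ_eq : δ = (t₂ - t₁) / (1 - c) * (p - q) := by
    field_simp [(sub_pos.2 hc₁).ne']
    linear_combination hδ
  rw [← hδ_eq]
  refine le_antisymm (wasserstein1_le_of_contracting (selfSimilarCouplingStep c t₁ t₂ p q)
    (a := c * (1 - (p - q))) (by nlinarith) (by nlinarith) (γ₀ := μp.prod μq) (by simp)
    (by simp) fun γ h₁ h₂ => ?_) ?_
  · have := isProbabilityMeasure_of_map_fst h₁
    refine ⟨map_fst_selfSimilarCouplingStep hssp h₁ hq hqp,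
      map_snd_selfSimilarCouplingStep hssq h₂ hqp hp, ?_⟩
    rw [integral_abs_sub_selfSimilarCouplingStep h₁ h₂ hsuppp hsuppq hc₀ ht hq hqp hp]
    linear_combination -hδ
  · have hδ₀ : 0 ≤ δ := by nlinarith
    calc δ = |∫ x, x ∂μp - ∫ x, x ∂μq| := by rw [abs_sub_comm, abs_of_nonneg hδ₀]
      _ ≤ wasserstein1 μp μq := abs_integral_sub_le_wasserstein1 hintp hintq

theorem wasserstein1_self_similar_general
    (c t₁ t₂ : ℝ) (hc : c ∈ Set.Ioc (0:ℝ) (1/2))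
    (ht₂ : t₂ ∈ Set.Icc (t₁ + c) (1 - c))
    (p q : ℝ) (hp : p ∈ Set.Ioo (0:ℝ) 1) (hq : q ∈ Set.Ioo (0:ℝ) 1)
    (μp : Measure ℝ) (hμp : IsProbabilityMeasure μp)
    (hsuppp : μp ((Set.Icc (0:ℝ) 1)ᶜ) = 0)
    (hssp : μp = ENNReal.ofReal p • μp.map (fun x : ℝ => c * x + t₁)
               + ENNReal.ofReal (1 - p) • μp.map (fun x : ℝ => c * x + t₂))
    (μq : Measure ℝ) (hμq : IsProbabilityMeasure μq)
    (hsuppq : μq ((Set.Icc (0:ℝ) 1)ᶜ) = 0)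
    (hssq : μq = ENNReal.ofReal q • μq.map (fun x : ℝ => c * x + t₁)
               + ENNReal.ofReal (1 - q) • μq.map (fun x : ℝ => c * x + t₂)) :
    wasserstein1 μp μq = (t₂ - t₁) / (1 - c) * |p - q| := by
  have hc₁ : c < 1 := by linarith [hc.2]
  have ht : c ≤ t₂ - t₁ := by linarith [ht₂.1]
  rcases le_total q p with hqp | hpq
  · rw [wasserstein1_eq_of_isSelfSimilar_of_le hc.1.le hc₁ ht hq.1.le hqp hp.2.le hsuppp hsuppq
      hssp hssq, abs_of_nonneg (sub_nonneg.2 hqp)]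
  · rw [wasserstein1_comm, wasserstein1_eq_of_isSelfSimilar_of_le hc.1.le hc₁ ht hp.1.le hpq
      hq.2.le hsuppq hsuppp hssq hssp, abs_of_nonpos (sub_nonpos.2 hpq)]
    ring

/-- Corollary 2.6: exact value of the first Wasserstein distance between two
self-similar measures. -/
theorem wasserstein1_self_similar
    (c t₁ t₂ : ℝ) (hc : c ∈ Set.Ioc (0:ℝ) (1/2))
    (ht₁ : t₁ ∈ Set.Icc (0:ℝ) (1 - 2*c)) (ht₂ : t₂ ∈ Set.Icc (t₁ + c) (1 - c))
    (p q : ℝ) (hp : p ∈ Set.Ioo (0:ℝ) 1) (hq : q ∈ Set.Ioo (0:ℝ) 1) (hpq : p ≠ q)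
    (μp : Measure ℝ) (hμp : IsProbabilityMeasure μp)
    (hsuppp : μp ((Set.Icc (0:ℝ) 1)ᶜ) = 0)
    (hssp : μp = ENNReal.ofReal p • μp.map (fun x : ℝ => c * x + t₁)
               + ENNReal.ofReal (1 - p) • μp.map (fun x : ℝ => c * x + t₂))
    (μq : Measure ℝ) (hμq : IsProbabilityMeasure μq)
    (hsuppq : μq ((Set.Icc (0:ℝ) 1)ᶜ) = 0)
    (hssq : μq = ENNReal.ofReal q • μq.map (fun x : ℝ => c * x + t₁)
               + ENNReal.ofReal (1 - q) • μq.map (fun x : ℝ => c * x + t₂)) :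
    wasserstein1 μp μq = (t₂ - t₁) / (1 - c) * |p - q| :=
  wasserstein1_self_similar_general c t₁ t₂ hc ht₂ p q hp hq μp hμp hsuppp hssp μq hμq hsuppq hssq
end
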